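/- Let P_1, ..., P_T be orthogonal projections on R^d. Then for every vector v and n ≥ 1, Σ_{t=0}^{n-1} ||(I − M)M^t v||^2 ≤ T·||v||^2, where M = P_T⋯P_1. -/
import Mathlib


/-- The product `P (n-1) * ⋯ * P 0` (so that `P 0` is applied first). -/
noncomputable def prodUpTo (d : ℕ)
    (P : ℕ → (EuclideanSpace ℝ (Fin d) →L[ℝ] EuclideanSpace ℝ (Fin d))) :
    ℕ → (EuclideanSpace ℝ (Fin d) →L[ℝ] EuclideanSpace ℝ (Fin d))
  | 0 => 1
  | n + 1 => P n * prodUpTo d P n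

open scoped RealInnerProductSpace

lemma proj_pyth {d : ℕ} (A : EuclideanSpace ℝ (Fin d) →L[ℝ] EuclideanSpace ℝ (Fin d))
    (hsa : IsSelfAdjoint A) (hid : A * A = A) (y : EuclideanSpace ℝ (Fin d)) :
    ‖y - A y‖ ^ 2 = ‖y‖ ^ 2 - ‖A y‖ ^ 2 := by
  have hAd : ∀ z x : EuclideanSpace ℝ (Fin d), ⟪A z, x⟫ = ⟪z, A x⟫ := fun z x => by
    conv_lhs => rw [← hsa.adjoint_eq]
    exact ContinuousLinearMap.adjoint_inner_left A x z
  have hAA : A (A y) = A y := by rw [← ContinuousLinearMap.mul_apply, hid]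
  have h1 : ⟪A y, A y⟫ = ⟪A y, y⟫ := by
    rw [hAd y (A y), hAA, real_inner_comm]
  have h0 : ⟪A y, y - A y⟫ = 0 := by rw [inner_sub_right, h1, sub_self]
  have := norm_add_sq_real (A y) (y - A y)
  simp only [add_sub_cancel, h0, mul_zero, add_zero] at this
  linarith

lemma prodUpTo_norm_le {d : ℕ}
    (P : ℕ → (EuclideanSpace ℝ (Fin d) →L[ℝ] EuclideanSpace ℝ (Fin d))) :
    ∀ T, (∀ i < T, IsSelfAdjoint (P i)) → (∀ i < T, P i * P i = P i) →
    ∀ x, ‖prodUpTo d P T x‖ ≤ ‖x‖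
  | 0, _, _, x => le_of_eq rfl
  | T + 1, hsa, hid, x => by
    have ih := prodUpTo_norm_le P T (fun i hi => hsa i (hi.trans (Nat.lt_succ_self T)))
      (fun i hi => hid i (hi.trans (Nat.lt_succ_self T))) x
    have hp := proj_pyth (P T) (hsa T (Nat.lt_succ_self T)) (hid T (Nat.lt_succ_self T))
      (prodUpTo d P T x)
    have : ‖P T (prodUpTo d P T x)‖ ≤ ‖prodUpTo d P T x‖ := by
      nlinarith [sq_nonneg ‖prodUpTo d P T x - P T (prodUpTo d P T x)‖,
        norm_nonneg (P T (prodUpTo d P T x)), norm_nonneg (prodUpTo d P T x)]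
    calc ‖prodUpTo d P (T+1) x‖ = ‖P T (prodUpTo d P T x)‖ := rfl
      _ ≤ ‖prodUpTo d P T x‖ := this
      _ ≤ ‖x‖ := ih

lemma key_ineq {d : ℕ}
    (P : ℕ → (EuclideanSpace ℝ (Fin d) →L[ℝ] EuclideanSpace ℝ (Fin d))) :
    ∀ T, (∀ i < T, IsSelfAdjoint (P i)) → (∀ i < T, P i * P i = P i) →
    ∀ x, ‖x - prodUpTo d P T x‖ ^ 2 ≤ T * (‖x‖ ^ 2 - ‖prodUpTo d P T x‖ ^ 2)
  | 0, _, _, x => by simp [prodUpTo]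
  | T + 1, hsa, hid, x => by
    set Q := prodUpTo d P T with hQ
    have hsa' : ∀ i < T, IsSelfAdjoint (P i) := fun i hi => hsa i (Nat.lt_trans hi (Nat.lt_succ_self T))
    have hid' : ∀ i < T, P i * P i = P i := fun i hi => hid i (Nat.lt_trans hi (Nat.lt_succ_self T))
    have ih := key_ineq P T hsa' hid' x
    have hp := proj_pyth (P T) (hsa T (Nat.lt_succ_self T)) (hid T (Nat.lt_succ_self T)) (Q x)
    have hmono : ‖Q x‖ ≤ ‖x‖ := prodUpTo_norm_le P T hsa' hid' x
    have hQ1 : prodUpTo d P (T+1) x = P T (Q x) := rfl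
    rw [hQ1]
    have htri : ‖x - P T (Q x)‖ ≤ ‖x - Q x‖ + ‖Q x - P T (Q x)‖ := by
      have : x - P T (Q x) = (x - Q x) + (Q x - P T (Q x)) := by abel
      rw [this]; exact norm_add_le _ _
    set a := ‖x - Q x‖
    set b := ‖Q x - P T (Q x)‖
    set c := ‖x - P T (Q x)‖
    have hs : (0:ℝ) ≤ ‖x‖ ^ 2 - ‖Q x‖ ^ 2 := by
      nlinarith [norm_nonneg (Q x), norm_nonneg x]
    have ha : 0 ≤ a := norm_nonneg _
    have hb : 0 ≤ b := norm_nonneg _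
    have hc : 0 ≤ c := norm_nonneg _
    set s := ‖x‖ ^ 2 - ‖Q x‖ ^ 2 with hsdef
    -- ih : a^2 ≤ T * s, hp : b^2 = ‖Q x‖^2 - ‖P T (Q x)‖^2
    -- goal : c^2 ≤ (T+1) * (s + b^2)
    have hTnn : (0:ℝ) ≤ (T:ℝ) := Nat.cast_nonneg T
    have hu : (0:ℝ) ≤ s + (T:ℝ) * b ^ 2 := add_nonneg hs (mul_nonneg hTnn (sq_nonneg b))
    have h2ab : 2 * a * b ≤ s + (T:ℝ) * b ^ 2 := by
      nlinarith [sq_nonneg (s - (T:ℝ) * b ^ 2), mul_le_mul_of_nonneg_right ih (sq_nonneg b),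
        mul_nonneg ha hb, hu, sq_nonneg (a*b), mul_nonneg (mul_nonneg ha hb) hu]
    have hcab : c ^ 2 ≤ (a + b) ^ 2 := by
      nlinarith [mul_self_le_mul_self hc htri]
    have key : c ^ 2 ≤ ((T:ℝ) + 1) * (s + b ^ 2) := by nlinarith [hcab, h2ab, ih]
    push_cast
    nlinarith [key]

theorem sum_residuals_le (d T : ℕ)
    (P : ℕ → (EuclideanSpace ℝ (Fin d) →L[ℝ] EuclideanSpace ℝ (Fin d)))
    (hsa : ∀ i < T, IsSelfAdjoint (P i)) (hidem : ∀ i < T, P i * P i = P i)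
    (v : EuclideanSpace ℝ (Fin d)) (n : ℕ) (hn : 1 ≤ n) :
    ∑ t ∈ Finset.range n,
        ‖(((1 : EuclideanSpace ℝ (Fin d) →L[ℝ] EuclideanSpace ℝ (Fin d))
            - prodUpTo d P T) * prodUpTo d P T ^ t) v‖ ^ 2
      ≤ (T : ℝ) * ‖v‖ ^ 2 := by
  set M := prodUpTo d P T with hM
  have hterm : ∀ t, ‖((1 - M) * M ^ t) v‖ ^ 2
      ≤ (T:ℝ) * (‖(M ^ t) v‖ ^ 2 - ‖(M ^ (t+1)) v‖ ^ 2) := by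
    intro t
    have h1 : ((1 - M) * M ^ t) v = (M ^ t) v - M ((M ^ t) v) := by
      simp [ContinuousLinearMap.mul_apply, ContinuousLinearMap.sub_apply]
    have h2 : (M ^ (t+1)) v = M ((M ^ t) v) := by
      rw [pow_succ' M t]; rfl
    rw [h1, h2]
    exact key_ineq P T hsa hidem ((M ^ t) v)
  calc ∑ t ∈ Finset.range n, ‖((1 - M) * M ^ t) v‖ ^ 2
      ≤ ∑ t ∈ Finset.range n, (T:ℝ) * (‖(M ^ t) v‖ ^ 2 - ‖(M ^ (t+1)) v‖ ^ 2) :=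
        Finset.sum_le_sum fun t _ => hterm t
    _ = (T:ℝ) * (‖(M ^ 0) v‖ ^ 2 - ‖(M ^ n) v‖ ^ 2) := by
        rw [← Finset.mul_sum, Finset.sum_range_sub' (fun t => ‖(M ^ t) v‖ ^ 2)]
    _ ≤ (T:ℝ) * ‖v‖ ^ 2 := by
        have : ‖(M ^ 0) v‖ = ‖v‖ := by simp
        rw [this]
        have := sq_nonneg ‖(M ^ n) v‖
        nlinarith [Nat.cast_nonneg (α := ℝ) T]
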